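/- Let (μ_t)_{t∈ℝ} be a Hopf deformation of a Hopf algebra B with deformed antipodes S_t (the convolution inverses of id w.r.t. ⋆_t). Then each S_t is unique, satisfies S_t(1) = 1, and S_t∘μ_{−t} = μ_t∘(S_t⊗S_t)∘τ, i.e., S_t: B_{−t} → B_t is an algebra antihomomorphism. -/

import Mathlib

open TensorProduct Coalgebra

variable {B : Type} [Ring B] [HopfAlgebra ℂ B]

/-- The comultiplication `Λ = (id ⊗ τ ⊗ id) ∘ (Δ ⊗ Δ)` of `B ⊗ B`. -/
noncomputable def Lam : B ⊗[ℂ] B →ₗ[ℂ] (B ⊗[ℂ] B) ⊗[ℂ] (B ⊗[ℂ] B) :=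
  (TensorProduct.tensorTensorTensorComm ℂ B B B B).toLinearMap ∘ₗ
    TensorProduct.map (comul (R := ℂ)) (comul (R := ℂ))

/-- The map `b ↦ δ(b)·1 : B → B`. -/
noncomputable def unitCounit : B →ₗ[ℂ] B :=
  Algebra.linearMap ℂ B ∘ₗ counit (R := ℂ)

/-!
For fixed `t`, the convolution `⋆_t` of linear maps out of a coalgebra is associative and unital
because `μ_t` is, so a left and a right `⋆_t`-inverse coincide; this gives the uniqueness of `S_t`.
On `B ⊗ B`, compatibility of `Δ` with `μ_{-t}` and `μ_t` (whose times add up to `0`, where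
`μ_0` is the product of `B`) makes `S_t ∘ μ_{-t}` a left `⋆_t`-inverse of `μ_t`, while
`μ_t ∘ (S_t ⊗ S_t) ∘ τ` is a right `⋆_t`-inverse by the usual Sweedler computation; hence the two
agree.
-/

section Convolution

variable {R C A : Type*} [CommSemiring R] [AddCommMonoid C] [Module R C] [Coalgebra R C]
  [AddCommMonoid A] [Module R A]

noncomputable def conv (m : A ⊗[R] A →ₗ[R] A) (F G : C →ₗ[R] A) : C →ₗ[R] A :=
  m ∘ₗ map F G ∘ₗ comul

noncomputable def convUnit (e : A) : C →ₗ[R] A :=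
  LinearMap.toSpanSingleton R A e ∘ₗ counit

variable (m : A ⊗[R] A →ₗ[R] A) {e : A}

lemma conv_apply_of_repr {c : C} {ι : Type*} (ρ : Repr R c ι) (F G : C →ₗ[R] A) :
    conv m F G c = ∑ i ∈ ρ.index, m (F (ρ.left i) ⊗ₜ G (ρ.right i)) := by
  simp [conv, ← ρ.eq]

lemma convUnit_apply (c : C) : convUnit (R := R) e c = counit (R := R) c • e := rfl

lemma convUnit_conv (hm : ∀ a, m (e ⊗ₜ a) = a) (F : C →ₗ[R] A) :
    conv m (convUnit e) F = F := by
  ext c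
  simp [conv, convUnit, ← LinearMap.map_rTensor, hm]

lemma conv_convUnit (hm : ∀ a, m (a ⊗ₜ e) = a) (F : C →ₗ[R] A) :
    conv m F (convUnit e) = F := by
  ext c
  simp [conv, convUnit, ← LinearMap.map_lTensor, hm]

lemma conv_assoc (hm : ∀ a b c, m (m (a ⊗ₜ b) ⊗ₜ c) = m (a ⊗ₜ m (b ⊗ₜ c)))
    (F G H : C →ₗ[R] A) : conv m (conv m F G) H = conv m F (conv m G H) := by
  have hm' : m ∘ₗ m.rTensor A ∘ₗ (TensorProduct.assoc R A A A).symm.toLinearMap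
      = m ∘ₗ m.lTensor A := by
    ext a b c; simp [hm]
  calc conv m (conv m F G) H
      = (m ∘ₗ m.rTensor A) ∘ₗ (map (map F G) H ∘ₗ (TensorProduct.assoc R C C C).symm.toLinearMap)
          ∘ₗ comul.lTensor C ∘ₗ comul := by
        have h : map (conv m F G) H = m.rTensor A ∘ₗ map (map F G) H ∘ₗ comul.rTensor C :=
          TensorProduct.ext' fun x y => by simp [conv]
        rw [conv, h]; simp only [LinearMap.comp_assoc, coassoc_symm]
    _ = (m ∘ₗ m.rTensor A ∘ₗ (TensorProduct.assoc R A A A).symm.toLinearMap) ∘ₗ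
          map F (map G H) ∘ₗ comul.lTensor C ∘ₗ comul := by
        simp only [map_map_comp_assoc_symm_eq, LinearMap.comp_assoc]
    _ = conv m F (conv m G H) := by
        have h : map F (conv m G H) = m.lTensor A ∘ₗ map F (map G H) ∘ₗ comul.lTensor C :=
          TensorProduct.ext' fun x y => by simp [conv]
        rw [hm', conv, h]; simp only [LinearMap.comp_assoc]

lemma conv_left_inv_eq_right_inv
    (hassoc : ∀ a b c, m (m (a ⊗ₜ b) ⊗ₜ c) = m (a ⊗ₜ m (b ⊗ₜ c)))
    (hleft : ∀ a, m (e ⊗ₜ a) = a) (hright : ∀ a, m (a ⊗ₜ e) = a) {F G H : C →ₗ[R] A}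
    (hFG : conv m F G = convUnit e) (hGH : conv m G H = convUnit e) : F = H :=
  calc F = conv m F (convUnit e) := (conv_convUnit m hright F).symm
    _ = conv m (conv m F G) H := by rw [← hGH, conv_assoc m hassoc]
    _ = H := by rw [hFG, convUnit_conv m hleft]

lemma conv_comp_comp {C' : Type*} [AddCommMonoid C'] [Module R C'] [Coalgebra R C']
    {φ ψ₁ ψ₂ : C' →ₗ[R] C} (h : map ψ₁ ψ₂ ∘ₗ comul = comul ∘ₗ φ) (F G : C →ₗ[R] A) :
    conv m (F ∘ₗ ψ₁) (G ∘ₗ ψ₂) = conv m F G ∘ₗ φ := by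
  simp only [conv, map_comp, LinearMap.comp_assoc, h]

lemma convUnit_comp {C' : Type*} [AddCommMonoid C'] [Module R C'] [Coalgebra R C']
    {φ : C' →ₗ[R] C} (h : counit ∘ₗ φ = counit) : convUnit e ∘ₗ φ = convUnit e := by
  rw [convUnit, LinearMap.comp_assoc, h, convUnit]

end Convolution

section Bialgebra

variable {R A : Type*} [CommSemiring R] [Semiring A] [Bialgebra R A]

lemma counit_comp_mul' :
    counit ∘ₗ LinearMap.mul' R A = counit (R := R) (A := A ⊗[R] A) :=
  TensorProduct.ext' fun a b => by simp [mul_comm]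

lemma map_one_of_conv_eq_convUnit {m : A ⊗[R] A →ₗ[R] A} (hm : ∀ a, m (a ⊗ₜ 1) = a)
    {S : A →ₗ[R] A} (hS : conv m S LinearMap.id = convUnit 1) : S 1 = 1 := by
  simpa [conv, convUnit, Algebra.TensorProduct.one_def, hm] using LinearMap.congr_fun hS 1

lemma conv_comp_mul_eq_convUnit {m m' : A ⊗[R] A →ₗ[R] A}
    (hcomp : map m' m ∘ₗ comul = comul ∘ₗ LinearMap.mul' R A) {S : A →ₗ[R] A} {e : A}
    (hS : conv m S LinearMap.id = convUnit e) : conv m (S ∘ₗ m') m = convUnit e := by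
  have h := conv_comp_comp m hcomp S LinearMap.id
  rwa [LinearMap.id_comp, hS, convUnit_comp counit_comp_mul'] at h

end Bialgebra

lemma conv_comp_map_comm_eq_convUnit {R A : Type*} [CommSemiring R] [AddCommMonoid A] [Module R A]
    [Coalgebra R A] {m : A ⊗[R] A →ₗ[R] A} {e : A}
    (hassoc : ∀ a b c, m (m (a ⊗ₜ b) ⊗ₜ c) = m (a ⊗ₜ m (b ⊗ₜ c)))
    (hleft : ∀ a, m (e ⊗ₜ a) = a) {S : A →ₗ[R] A} (hS : conv m LinearMap.id S = convUnit e) :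
    conv m m (m ∘ₗ map S S ∘ₗ (TensorProduct.comm R A A).toLinearMap) = convUnit e := by
  refine TensorProduct.ext' fun a b => ?_
  set ρa := ℛ R a
  set ρb := ℛ R b
  have hSa : ∑ i ∈ ρa.index, m (ρa.left i ⊗ₜ S (ρa.right i)) = counit (R := R) a • e := by
    simpa [conv_apply_of_repr m ρa, convUnit_apply] using LinearMap.congr_fun hS a
  have hSb : ∑ j ∈ ρb.index, m (ρb.left j ⊗ₜ S (ρb.right j)) = counit (R := R) b • e := by
    simpa [conv_apply_of_repr m ρb, convUnit_apply] using LinearMap.congr_fun hS b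
  have hmid : ∀ x y z w, m (m (x ⊗ₜ y) ⊗ₜ m (z ⊗ₜ w)) = m (x ⊗ₜ m (m (y ⊗ₜ z) ⊗ₜ w)) :=
    fun x y z w => by rw [hassoc, ← hassoc y]
  calc conv m m (m ∘ₗ map S S ∘ₗ (TensorProduct.comm R A A).toLinearMap) (a ⊗ₜ b)
      = ∑ i ∈ ρa.index, ∑ j ∈ ρb.index, m (m (ρa.left i ⊗ₜ ρb.left j) ⊗ₜ
          m (S (ρb.right j) ⊗ₜ S (ρa.right i))) := by
        simp [conv, ← ρa.eq, ← ρb.eq, sum_tmul, tmul_sum, Finset.sum_comm (s := ρb.index)]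
    _ = ∑ i ∈ ρa.index, m (ρa.left i ⊗ₜ
          m ((∑ j ∈ ρb.index, m (ρb.left j ⊗ₜ S (ρb.right j))) ⊗ₜ S (ρa.right i))) := by
        simp [hmid, sum_tmul, tmul_sum]
    _ = counit (R := R) b • ∑ i ∈ ρa.index, m (ρa.left i ⊗ₜ S (ρa.right i)) := by
        simp [hSb, ← smul_tmul', hleft, Finset.smul_sum]
    _ = convUnit e (a ⊗ₜ b) := by
        rw [hSa, convUnit_apply, smul_smul, TensorProduct.counit_tmul, smul_eq_mul]

lemma unitCounit_eq_convUnit : (unitCounit : B →ₗ[ℂ] B) = convUnit 1 := by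
  ext x
  simp [unitCounit, convUnit, Algebra.algebraMap_eq_smul_one]

theorem stmt10_general (μt : ℝ → (B ⊗[ℂ] B →ₗ[ℂ] B))
    (hzero : μt 0 = LinearMap.mul' ℂ B)
    (hassoc : ∀ (t : ℝ) (a b c : B),
      μt t (μt t (a ⊗ₜ[ℂ] b) ⊗ₜ[ℂ] c) = μt t (a ⊗ₜ[ℂ] μt t (b ⊗ₜ[ℂ] c)))
    (hone : ∀ (t : ℝ) (a : B), μt t ((1 : B) ⊗ₜ[ℂ] a) = a ∧ μt t (a ⊗ₜ[ℂ] (1 : B)) = a)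
    (hcompat : ∀ t s : ℝ,
      comul (R := ℂ) ∘ₗ μt (t + s) = TensorProduct.map (μt t) (μt s) ∘ₗ Lam)
    (S : ℝ → (B →ₗ[ℂ] B))
    (hS : ∀ t : ℝ,
      μt t ∘ₗ TensorProduct.map (S t) LinearMap.id ∘ₗ comul (R := ℂ) = unitCounit ∧
      μt t ∘ₗ TensorProduct.map LinearMap.id (S t) ∘ₗ comul (R := ℂ) = unitCounit) :
    (∀ (t : ℝ) (S' : B →ₗ[ℂ] B),
        (μt t ∘ₗ TensorProduct.map S' LinearMap.id ∘ₗ comul (R := ℂ) = unitCounit ∧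
         μt t ∘ₗ TensorProduct.map LinearMap.id S' ∘ₗ comul (R := ℂ) = unitCounit) →
        S' = S t) ∧
    (∀ t : ℝ, S t 1 = 1) ∧
    (∀ t : ℝ, S t ∘ₗ μt (-t)
      = μt t ∘ₗ TensorProduct.map (S t) (S t) ∘ₗ (TensorProduct.comm ℂ B B).toLinearMap) := by
  have hleft (t : ℝ) (a : B) : μt t (1 ⊗ₜ a) = a := (hone t a).1
  have hright (t : ℝ) (a : B) : μt t (a ⊗ₜ 1) = a := (hone t a).2
  have hinv (t : ℝ) : conv (μt t) (S t) LinearMap.id = convUnit 1 ∧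
      conv (μt t) LinearMap.id (S t) = convUnit 1 := by
    rw [← unitCounit_eq_convUnit]
    exact hS t
  have hcomp (t : ℝ) : map (μt (-t)) (μt t) ∘ₗ comul = comul ∘ₗ LinearMap.mul' ℂ B := by
    have h := hcompat (-t) t
    rw [neg_add_cancel, hzero] at h
    -- `Lam` is by definition the comultiplication of the coalgebra `B ⊗[ℂ] B`
    exact h.symm
  refine ⟨fun t S' hS' => ?_, fun t => ?_, fun t => ?_⟩
  · rw [unitCounit_eq_convUnit] at hS'
    exact conv_left_inv_eq_right_inv _ (hassoc t) (hleft t) (hright t) hS'.1 (hinv t).2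
  · exact map_one_of_conv_eq_convUnit (hright t) (hinv t).1
  · exact conv_left_inv_eq_right_inv _ (hassoc t) (hleft t) (hright t)
      (conv_comp_mul_eq_convUnit (hcomp t) (hinv t).1)
      (conv_comp_map_comm_eq_convUnit (hassoc t) (hleft t) (hinv t).2)

/-- Let `(μ_t)_{t∈ℝ}` be a Hopf deformation of the Hopf algebra `B` with deformed
antipodes `S_t`, i.e. `μ_t ∘ (S_t ⊗ id) ∘ Δ = μ_t ∘ (id ⊗ S_t) ∘ Δ = δ(·)1`.  Then each
`S_t` is unique (it is the two-sided `⋆_t`-convolution inverse of the identity),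
`S_t(1) = 1`, and `S_t ∘ μ_{−t} = μ_t ∘ (S_t ⊗ S_t) ∘ τ`, i.e. `S_t : B_{−t} → B_t` is an
algebra antihomomorphism. -/
theorem stmt10 (μt : ℝ → (B ⊗[ℂ] B →ₗ[ℂ] B))
    (hzero : μt 0 = LinearMap.mul' ℂ B)
    (hassoc : ∀ (t : ℝ) (a b c : B),
      μt t (μt t (a ⊗ₜ[ℂ] b) ⊗ₜ[ℂ] c) = μt t (a ⊗ₜ[ℂ] μt t (b ⊗ₜ[ℂ] c)))
    (hone : ∀ (t : ℝ) (a : B), μt t ((1 : B) ⊗ₜ[ℂ] a) = a ∧ μt t (a ⊗ₜ[ℂ] (1 : B)) = a)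
    (hcompat : ∀ t s : ℝ,
      comul (R := ℂ) ∘ₗ μt (t + s) = TensorProduct.map (μt t) (μt s) ∘ₗ Lam)
    (hcont : ∀ x : B ⊗[ℂ] B, Continuous fun t : ℝ => counit (R := ℂ) (μt t x))
    (S : ℝ → (B →ₗ[ℂ] B))
    (hS : ∀ t : ℝ,
      μt t ∘ₗ TensorProduct.map (S t) LinearMap.id ∘ₗ comul (R := ℂ) = unitCounit ∧
      μt t ∘ₗ TensorProduct.map LinearMap.id (S t) ∘ₗ comul (R := ℂ) = unitCounit) :
    (∀ (t : ℝ) (S' : B →ₗ[ℂ] B),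
        (μt t ∘ₗ TensorProduct.map S' LinearMap.id ∘ₗ comul (R := ℂ) = unitCounit ∧
         μt t ∘ₗ TensorProduct.map LinearMap.id S' ∘ₗ comul (R := ℂ) = unitCounit) →
        S' = S t) ∧
    (∀ t : ℝ, S t 1 = 1) ∧
    (∀ t : ℝ, S t ∘ₗ μt (-t)
      = μt t ∘ₗ TensorProduct.map (S t) (S t) ∘ₗ (TensorProduct.comm ℂ B B).toLinearMap) :=
  stmt10_general μt hzero hassoc hone hcompat S hS
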